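/- Let J be a finite digraph with maximum out-degree exactly D where D > m(J), let L be the set of vertices of out-degree exactly D, let R = N⁺(L) be the out-neighbourhood of L, and let c = ⌈m(J)/(D - m(J))⌉. In the bipartite graph A with parts L and R × {1,...,c}, where u ∈ L is adjacent to (v,i) whenever uv is an edge of J, Hall's condition holds: every subset U ⊆ L satisfies |N_A(U)| ≥ |U|. -/

import Mathlib

/-!
Double-count the edges leaving `U`: each of the `|U|` vertices has out-degree `D`, and all these
edges lie inside `U ∪ N⁺(U)`, whose density is at most `m = m(J)`. Hence
`D |U| ≤ m (|U| + |N⁺(U)|)`, i.e. `|U| ≤ m / (D - m) · |N⁺(U)| ≤ c |N⁺(U)|`.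
-/

open Finset
open scoped Classical

/-- Out-degree of `v` in the digraph with edge set `E`. -/
noncomputable def outDeg {V : Type*} (E : Finset (V × V)) (v : V) : ℕ :=
  (E.filter (fun e => e.1 = v)).card

/-- In-degree of `v` in the digraph with edge set `E`. -/
noncomputable def inDeg {V : Type*} (E : Finset (V × V)) (v : V) : ℕ :=
  (E.filter (fun e => e.2 = v)).card

/-- Number of edges of the digraph `E` lying inside the vertex set `S`. -/
noncomputable def dEdgesIn {V : Type*} (E : Finset (V × V)) (S : Finset V) : ℕ :=
  (E.filter (fun e => e.1 ∈ S ∧ e.2 ∈ S)).card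

/-- The maximum density `m(J)` of a finite digraph, computed on the underlying graph. -/
noncomputable def dMaxDensity {V : Type*} [Fintype V] [Nonempty V] (E : Finset (V × V)) : ℝ :=
  ((Finset.univ : Finset (Finset V)).filter (fun S => S.Nonempty)).sup'
    ⟨Finset.univ, by simp [Finset.univ_nonempty]⟩
    (fun S => (dEdgesIn E S : ℝ) / (S.card : ℝ))

section Density

variable {V : Type*}

noncomputable def outNbhd [Fintype V] (E : Finset (V × V)) (U : Finset V) : Finset V :=
  univ.filter fun v => ∃ u ∈ U, (u, v) ∈ E

theorem sum_outDeg_eq_card_filter (E : Finset (V × V)) (U : Finset V) :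
    ∑ u ∈ U, outDeg E u = #(E.filter fun e => e.1 ∈ U) := by
  rw [card_eq_sum_card_fiberwise (s := E.filter fun e => e.1 ∈ U) (t := U) (f := Prod.fst)
    fun e he => (mem_filter.mp he).2]
  refine sum_congr rfl fun u hu => ?_
  rw [outDeg, filter_filter]
  congr 1
  exact filter_congr fun e _ => ⟨fun h => ⟨h ▸ hu, h⟩, And.right⟩

theorem sum_outDeg_le_dEdgesIn_union_outNbhd [Fintype V] (E : Finset (V × V)) (U : Finset V) :
    ∑ u ∈ U, outDeg E u ≤ dEdgesIn E (U ∪ outNbhd E U) := by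
  rw [sum_outDeg_eq_card_filter, dEdgesIn]
  refine card_le_card fun e he => ?_
  obtain ⟨heE, heU⟩ := mem_filter.mp he
  refine mem_filter.mpr ⟨heE, mem_union_left _ heU, mem_union_right _ ?_⟩
  exact mem_filter.mpr ⟨mem_univ _, e.1, heU, heE⟩

variable [Fintype V] [Nonempty V]

theorem div_card_le_dMaxDensity (E : Finset (V × V)) {S : Finset V} (hS : S.Nonempty) :
    (dEdgesIn E S : ℝ) / #S ≤ dMaxDensity E :=
  le_sup' (fun S : Finset V => (dEdgesIn E S : ℝ) / #S) (by simp [hS])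

theorem dMaxDensity_nonneg (E : Finset (V × V)) : 0 ≤ dMaxDensity E :=
  (by positivity : (0 : ℝ) ≤ (dEdgesIn E univ : ℝ) / #univ).trans
    (div_card_le_dMaxDensity E univ_nonempty)

theorem dEdgesIn_le_dMaxDensity_mul_card (E : Finset (V × V)) (S : Finset V) :
    (dEdgesIn E S : ℝ) ≤ dMaxDensity E * #S := by
  rcases S.eq_empty_or_nonempty with rfl | hS
  · simp [dEdgesIn]
  · have hpos : (0 : ℝ) < #S := by exact_mod_cast hS.card_pos
    exact (div_le_iff₀ hpos).mp (div_card_le_dMaxDensity E hS)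

theorem sum_outDeg_le_dMaxDensity_mul (E : Finset (V × V)) (U : Finset V) :
    ((∑ u ∈ U, outDeg E u : ℕ) : ℝ) ≤ dMaxDensity E * (#U + #(outNbhd E U)) := by
  calc ((∑ u ∈ U, outDeg E u : ℕ) : ℝ)
      ≤ dEdgesIn E (U ∪ outNbhd E U) := by
        exact_mod_cast sum_outDeg_le_dEdgesIn_union_outNbhd E U
    _ ≤ dMaxDensity E * #(U ∪ outNbhd E U) := dEdgesIn_le_dMaxDensity_mul_card E _
    _ ≤ dMaxDensity E * (#U + #(outNbhd E U)) := by
        gcongr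
        · exact dMaxDensity_nonneg E
        · exact_mod_cast card_union_le U _

theorem card_le_ceil_mul_card_outNbhd (E : Finset (V × V)) {D : ℕ} (hm : dMaxDensity E < D)
    {U : Finset V} (hU : ∀ u ∈ U, outDeg E u = D) :
    #U ≤ ⌈dMaxDensity E / (D - dMaxDensity E)⌉₊ * #(outNbhd E U) := by
  set m := dMaxDensity E
  have hDm : 0 < (D : ℝ) - m := sub_pos.mpr hm
  have hdouble : (D : ℝ) * #U ≤ m * (#U + #(outNbhd E U)) := by
    have := sum_outDeg_le_dMaxDensity_mul E U
    rwa [sum_congr rfl hU, sum_const, smul_eq_mul, Nat.cast_mul, mul_comm] at this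
  have hU_le : (#U : ℝ) ≤ m / (D - m) * #(outNbhd E U) := by
    rw [div_mul_eq_mul_div, le_div_iff₀ hDm]
    linarith
  have : (#U : ℝ) ≤ ⌈m / (D - m)⌉₊ * #(outNbhd E U) :=
    hU_le.trans (by gcongr; exact Nat.le_ceil _)
  exact_mod_cast this

end Density

theorem stmt_1_general {V : Type*} [Fintype V] [Nonempty V] (E : Finset (V × V)) (D : ℕ)
    (hm : dMaxDensity E < (D : ℝ))
    (c : ℕ) (hc : c = ⌈dMaxDensity E / ((D : ℝ) - dMaxDensity E)⌉₊)
    (U : Finset V) (hU : ∀ u ∈ U, outDeg E u = D) :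
    U.card ≤ (((Finset.univ.filter (fun v => ∃ u ∈ U, (u, v) ∈ E)) ×ˢ
      (Finset.univ : Finset (Fin c)))).card := by
  rw [card_product, card_univ, Fintype.card_fin, mul_comm, hc]
  exact card_le_ceil_mul_card_outNbhd E hm hU

/-- Hall's condition in the auxiliary bipartite graph. With `L` the set of
vertices of out-degree exactly `D`, `c = ⌈m(J)/(D - m(J))⌉`, and `A` the bipartite graph between
`L` and `N⁺(L) × [c]`, every `U ⊆ L` satisfies `|N_A(U)| = |N⁺(U) × [c]| ≥ |U|`. -/
theorem stmt_1 {V : Type*} [Fintype V] [Nonempty V] (E : Finset (V × V)) (D : ℕ)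
    (hD : ∀ v, outDeg E v ≤ D) (hDex : ∃ v, outDeg E v = D)
    (hm : dMaxDensity E < (D : ℝ))
    (c : ℕ) (hc : c = ⌈dMaxDensity E / ((D : ℝ) - dMaxDensity E)⌉₊)
    (U : Finset V) (hU : ∀ u ∈ U, outDeg E u = D) :
    U.card ≤ (((Finset.univ.filter (fun v => ∃ u ∈ U, (u, v) ∈ E)) ×ˢ
      (Finset.univ : Finset (Fin c)))).card :=
  stmt_1_general E D hm c hc U hU
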